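/- If M is a self-adjoint n×n matrix over ℍ_ℂ and two distinct columns of M are equal (i.e., there exist i ≠ j with M_{k,i} = M_{k,j} for all k), then Qdet M = 0; the same conclusion holds if two distinct rows of M are equal. -/

import Mathlib

open Quaternion Matrix

/-- The complexified quaternions `ℍ_ℂ`. -/
abbrev HC : Type := QuaternionAlgebra ℂ (-1) 0 (-1)

/-- The factor of the Moore-Dyson quaternion determinant corresponding to the cycle of `σ`
through `x`, the cycle being written starting at `x`:
`M_{x, σx} M_{σx, σ²x} ⋯ M_{σ^{s-1}x, x}` where `s` is the length of the cycle. -/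
noncomputable def cycFac {n : ℕ} (M : Matrix (Fin n) (Fin n) HC) (σ : Equiv.Perm (Fin n))
    (x : Fin n) : HC :=
  ((List.range (orderOf (σ.cycleOf x))).map (fun t => M ((σ ^ t) x) ((σ ^ (t + 1)) x))).prod

open scoped Classical in
/-- The term `M_σ` of the Moore-Dyson quaternion determinant: the product over the cycles of `σ`,
each cycle starting at its largest element, the cycles being ordered by decreasing largest
element (cycles of length one are included). -/
noncomputable def permFac {n : ℕ} (M : Matrix (Fin n) (Fin n) HC) (σ : Equiv.Perm (Fin n)) : HC :=
  (((Finset.univ.filter (fun x : Fin n => ∀ y : Fin n, σ.SameCycle x y → y ≤ x)).sort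
      (· ≤ ·)).reverse.map (cycFac M σ)).prod

/-- The Moore-Dyson quaternion determinant `Qdet M = Σ_{σ ∈ S_n} sgn(σ) M_σ`. -/
noncomputable def Qdet {n : ℕ} (M : Matrix (Fin n) (Fin n) HC) : HC :=
  ∑ σ : Equiv.Perm (Fin n), ((Equiv.Perm.sign σ : ℤ) : HC) * permFac M σ

/-- A square quaternion matrix is self-adjoint if `M i j = conj (M j i)` for all `i, j`. -/
def IsSelfAdjointQ {n : ℕ} (M : Matrix (Fin n) (Fin n) HC) : Prop :=
  ∀ i j, M i j = star (M j i)

/-!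
For self-adjoint `M`, reversing one cycle of `σ` keeps the sign of `σ` and replaces the factor of
that cycle by its conjugate. Telescoping `M_σ` against the product of the real parts of its cycle
factors, and pairing each term with the one for the reversed cycle, gives
`Qdet M = Σ_σ sgn σ ∏_c Re M_c`: a scalar in which neither the order of the cycles nor their
starting points matter any more.

If rows `i` and `j` of `M` agree and `σ` separates `i` and `j`, with cycle factors `p` and `q`
there, then `σ (i j)` has one cycle through both, with factor `p q`; doing the same after reversing
the cycle of `j` gives `p q̄`. As `Re (p q) + Re (p q̄) = 2 Re p Re q` and both merged permutations
have sign `-sgn σ`, the permutations with `i` and `j` in one cycle contribute exactly minus the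
others. Equal columns give equal rows by self-adjointness.
-/

instance : IsAddTorsionFree HC := .of_module_rat HC

namespace QuaternionAlgebra

variable {R : Type*} [CommRing R] {c₁ c₃ : R} (a b : ℍ[R, c₁, c₃])

lemma re_mul_comm : (a * b).re = (b * a).re := by
  simp only [re_mul]; ring

lemma re_star_eq_re : (star a).re = a.re := by simp

lemma re_mul_add_re_mul_star : (a * b).re + (a * star b).re = 2 * a.re * b.re := by
  rw [← re_add, ← mul_add, self_add_star', mul_coe_eq_smul, re_smul, smul_eq_mul]
  ring

lemma star_sub_coe_re : star a - a.re = -(a - a.re) := by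
  rw [neg_sub, sub_eq_sub_iff_add_eq_add, star_add_self']
  ext <;> simp [two_mul]

end QuaternionAlgebra

lemma List.star_prod_map_range {R : Type*} [Monoid R] [StarMul R] (f : ℕ → R) (s : ℕ) :
    star ((List.range s).map f).prod = ((List.range s).map fun t => star (f (s - 1 - t))).prod := by
  induction s with
  | zero => simp
  | succ s ih =>
    rw [List.prod_range_succ, star_mul, ih, List.prod_range_succ']
    simp only [Nat.add_sub_cancel, Nat.sub_zero]
    congr 3 with t
    congr 2
    omega

namespace Finset

lemma sum_eq_zero_of_neg_involution {ι M : Type*} [AddCommGroup M] [IsAddTorsionFree M]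
    {s : Finset ι} {f : ι → M} (g : ι → ι) (hg : ∀ a ∈ s, g a ∈ s)
    (hgg : ∀ a ∈ s, g (g a) = a) (hf : ∀ a ∈ s, f (g a) = -f a) : ∑ x ∈ s, f x = 0 :=
  sum_involution (fun a _ => g a) (fun a ha => by rw [hf a ha, add_neg_cancel])
    (fun a ha hfa hga => hfa (self_eq_neg.1 (by simpa [hga] using hf a ha))) hg hgg

variable {α R : Type*} [LinearOrder α]

def descProd [Monoid R] (s : Finset α) (f : α → R) : R :=
  ((s.sort (· ≤ ·)).reverse.map f).prod

lemma descProd_congr [Monoid R] {s : Finset α} {f g : α → R} (h : ∀ x ∈ s, f x = g x) :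
    s.descProd f = s.descProd g :=
  congrArg List.prod (List.map_congr_left fun x hx => h x (by simpa using hx))

lemma descProd_insert_of_forall_lt [Monoid R] {s : Finset α} {a : α} (h : ∀ x ∈ s, a < x)
    (f : α → R) : (insert a s).descProd f = s.descProd f * f a := by
  rw [descProd, sort_insert _ (fun x hx => (h x hx).le) fun ha => (h a ha).false]
  simp [descProd]

lemma descProd_comp_monoidHom {S F : Type*} [Monoid R] [CommMonoid S] [FunLike F S R]
    [MonoidHomClass F S R] (φ : F) (s : Finset α) (h : α → S) :
    s.descProd (fun x => φ (h x)) = φ (∏ x ∈ s, h x) := by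
  rw [descProd, show (fun x => φ (h x)) = φ ∘ h from rfl, ← List.map_map, ← map_list_prod,
    List.map_reverse, List.prod_reverse, prod_eq_multiset_prod, ← sort_eq s (· ≤ ·),
    Multiset.map_coe, Multiset.prod_coe]

lemma descProd_sub_descProd [Ring R] (s : Finset α) (f g : α → R) :
    s.descProd f - s.descProd g =
      ∑ z ∈ s, (s.filter (z < ·)).descProd g * (f z - g z) * (s.filter (· < z)).descProd f := by
  induction s using induction_on_min with
  | empty => simp [descProd]
  | insert a s ha ih =>
    have hlt : ∀ z ∈ s, ¬z < a := fun z hz => (ha z hz).not_gt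
    rw [sum_insert fun h => (ha a h).false, descProd_insert_of_forall_lt ha,
      descProd_insert_of_forall_lt ha, filter_insert, if_neg (lt_irrefl a), filter_insert,
      if_neg (lt_irrefl a), filter_true_of_mem ha, filter_false_of_mem hlt]
    have hsplit : ∀ z ∈ s,
        (insert a s).filter (z < ·) = s.filter (z < ·) ∧
          (insert a s).filter (· < z) = insert a (s.filter (· < z)) := fun z hz => by
      simp [filter_insert, hlt z hz, ha z hz]
    rw [sum_congr rfl fun z hz => by
      rw [(hsplit z hz).1, (hsplit z hz).2,
        descProd_insert_of_forall_lt (fun x hx => ha x (mem_filter.1 hx).1), ← mul_assoc],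
      ← sum_mul, ← ih]
    simp only [descProd, sort_empty, List.reverse_nil, List.map_nil, List.prod_nil, mul_one]
    noncomm_ring

end Finset

namespace Equiv.Perm

variable {α : Type*} {σ ρ π : Perm α} {i j x y z : α}

lemma pow_apply_eq_pow_apply_of_forall_lt {t : ℕ}
    (h : ∀ s < t, ρ ((σ ^ s) x) = σ ((σ ^ s) x)) : (ρ ^ t) x = (σ ^ t) x := by
  induction t with
  | zero => rfl
  | succ t ih =>
    rw [pow_succ', mul_apply, ih fun s hs => h s (by omega), h t t.lt_succ_self, pow_succ',
      mul_apply]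

lemma SameCycle.mem_of_forall_apply_mem [Finite α] (h : σ.SameCycle x y) {S : Set α}
    (hS : ∀ z ∈ S, σ z ∈ S) (hx : x ∈ S) : y ∈ S := by
  obtain ⟨t, -, rfl⟩ := h.exists_pow_eq'
  clear h
  induction t with
  | zero => exact hx
  | succ t ih => rw [pow_succ', mul_apply]; exact hS _ ih

lemma sameCycle_iff_exists_pow_apply_eq [Finite α] : σ.SameCycle x y ↔ ∃ t : ℕ, (σ ^ t) x = y :=
  ⟨fun h => (h.exists_pow_eq').imp fun _ h => h.2, fun ⟨_, h⟩ => h ▸ sameCycle_pow_right.2 .rfl⟩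

lemma sameCycle_iff_of_forall_pow_apply_eq [Finite α] (h : ∀ t : ℕ, (ρ ^ t) x = (π ^ t) x) :
    ρ.SameCycle x y ↔ π.SameCycle x y := by
  simp only [sameCycle_iff_exists_pow_apply_eq, h]

section CycleOf

variable [DecidableEq α]

lemma swap_apply_mem {S : Set α} (hi : i ∈ S) (hj : j ∈ S) (hx : x ∈ S) : swap i j x ∈ S := by
  rw [swap_apply_def]
  split_ifs <;> assumption

lemma mul_swap_pow_apply_of_not_sameCycle (hi : ¬σ.SameCycle i x) (hj : ¬σ.SameCycle j x) (t : ℕ) :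
    ((σ * swap i j) ^ t) x = (σ ^ t) x :=
  pow_apply_eq_pow_apply_of_forall_lt fun s _ => by
    rw [Perm.mul_apply, swap_apply_of_ne_of_ne
      (fun h => hi (h ▸ sameCycle_pow_right.2 .rfl).symm)
      (fun h => hj (h ▸ sameCycle_pow_right.2 .rfl).symm)]

variable [Fintype α]

lemma pow_apply_eq_self_iff_orderOf_cycleOf_dvd (σ : Perm α) (x : α) (k : ℕ) :
    (σ ^ k) x = x ↔ orderOf (σ.cycleOf x) ∣ k := by
  rw [orderOf_dvd_iff_pow_eq_one]
  by_cases hx : σ x = x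
  · simp [(cycleOf_eq_one_iff σ).2 hx, pow_apply_eq_self_of_apply_eq_self hx]
  · rw [(isCycle_cycleOf σ hx).pow_eq_one_iff' (by rwa [cycleOf_apply_self]),
      cycleOf_pow_apply_self]

lemma pow_orderOf_cycleOf_apply (σ : Perm α) (x : α) : (σ ^ orderOf (σ.cycleOf x)) x = x :=
  (pow_apply_eq_self_iff_orderOf_cycleOf_dvd σ x _).2 dvd_rfl

lemma orderOf_cycleOf_eq_of_forall_pow_apply_eq_self_iff
    (h : ∀ k : ℕ, (ρ ^ k) x = x ↔ (σ ^ k) x = x) :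
    orderOf (ρ.cycleOf x) = orderOf (σ.cycleOf x) :=
  Nat.dvd_right_iff_eq.1 fun k => by
    rw [← pow_apply_eq_self_iff_orderOf_cycleOf_dvd, ← pow_apply_eq_self_iff_orderOf_cycleOf_dvd,
      h]

lemma orderOf_cycleOf_eq_of_pow_apply {p : ℕ} (hp : 0 < p) (hx : (σ ^ p) x = x)
    (hmin : ∀ t, 0 < t → t < p → (σ ^ t) x ≠ x) : orderOf (σ.cycleOf x) = p := by
  have hdvd := (pow_apply_eq_self_iff_orderOf_cycleOf_dvd σ x p).1 hx
  by_contra hne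
  exact hmin _ (orderOf_pos _) (lt_of_le_of_ne (Nat.le_of_dvd hp hdvd) hne)
    (pow_orderOf_cycleOf_apply σ x)

/-- `σ⁻¹.cycleOf z` acts as `σ⁻¹` on the cycle of `z` and trivially elsewhere, so this
permutation acts as `σ⁻¹` on that cycle and as `σ` off it. -/
def reverseCycle (σ : Perm α) (z : α) : Perm α := σ * σ⁻¹.cycleOf z ^ 2

lemma reverseCycle_apply_of_sameCycle (h : σ.SameCycle z y) : σ.reverseCycle z y = σ⁻¹ y := by
  rw [reverseCycle, mul_apply, (sameCycle_inv.2 h).cycleOf_eq, cycleOf_pow_apply_self]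
  simp [pow_two]

lemma reverseCycle_apply_of_not_sameCycle (h : ¬σ.SameCycle z y) :
    σ.reverseCycle z y = σ y := by
  rw [reverseCycle, mul_apply, pow_apply_eq_self_of_apply_eq_self
    (cycleOf_apply_of_not_sameCycle (mt sameCycle_inv.1 h))]

lemma reverseCycle_pow_apply_of_sameCycle (h : σ.SameCycle z y) (t : ℕ) :
    (σ.reverseCycle z ^ t) y = (σ⁻¹ ^ t) y :=
  pow_apply_eq_pow_apply_of_forall_lt fun _ _ => reverseCycle_apply_of_sameCycle
    (h.trans (sameCycle_inv.1 (sameCycle_pow_right.2 .rfl)))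

lemma reverseCycle_pow_apply_of_not_sameCycle (h : ¬σ.SameCycle z y) (t : ℕ) :
    (σ.reverseCycle z ^ t) y = (σ ^ t) y :=
  pow_apply_eq_pow_apply_of_forall_lt fun _ _ => reverseCycle_apply_of_not_sameCycle
    fun h' => h (h'.trans (sameCycle_pow_right.2 .rfl).symm)

lemma sameCycle_reverseCycle_iff : (σ.reverseCycle z).SameCycle x y ↔ σ.SameCycle x y := by
  by_cases h : σ.SameCycle z x
  · rw [sameCycle_iff_of_forall_pow_apply_eq (reverseCycle_pow_apply_of_sameCycle h),
      sameCycle_inv]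
  · exact sameCycle_iff_of_forall_pow_apply_eq (reverseCycle_pow_apply_of_not_sameCycle h)

lemma orderOf_cycleOf_reverseCycle (σ : Perm α) (z y : α) :
    orderOf ((σ.reverseCycle z).cycleOf y) = orderOf (σ.cycleOf y) := by
  refine orderOf_cycleOf_eq_of_forall_pow_apply_eq_self_iff fun k => ?_
  by_cases h : σ.SameCycle z y
  · rw [reverseCycle_pow_apply_of_sameCycle h, inv_pow, inv_eq_iff_eq, eq_comm]
  · rw [reverseCycle_pow_apply_of_not_sameCycle h]

@[simp]
lemma sign_reverseCycle (σ : Perm α) (z : α) : sign (σ.reverseCycle z) = sign σ := by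
  rw [reverseCycle, map_mul, map_pow, Int.units_sq, mul_one]

@[simp]
lemma reverseCycle_reverseCycle (σ : Perm α) (z : α) :
    (σ.reverseCycle z).reverseCycle z = σ := by
  ext y
  by_cases h : σ.SameCycle z y
  · rw [reverseCycle_apply_of_sameCycle (sameCycle_reverseCycle_iff.2 h), inv_eq_iff_eq,
      reverseCycle_apply_of_sameCycle (h.trans (sameCycle_apply_right.2 .rfl))]
    simp
  · rw [reverseCycle_apply_of_not_sameCycle (mt sameCycle_reverseCycle_iff.1 h),
      reverseCycle_apply_of_not_sameCycle h]

lemma mul_swap_pow_apply_apply_self (hsep : ¬σ.SameCycle x y) {t : ℕ}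
    (ht : t < orderOf (σ.cycleOf x)) : ((σ * swap x y) ^ t) (σ x) = (σ ^ (t + 1)) x := by
  rw [pow_succ, Perm.mul_apply]
  refine pow_apply_eq_pow_apply_of_forall_lt fun s hs => ?_
  have hsx : (σ ^ s) (σ x) = (σ ^ (s + 1)) x := by rw [pow_succ, Perm.mul_apply]
  have hne_x : (σ ^ s) (σ x) ≠ x := fun h => by
    rw [hsx, pow_apply_eq_self_iff_orderOf_cycleOf_dvd] at h
    exact absurd (Nat.le_of_dvd s.succ_pos h) (by omega)
  have hne_y : (σ ^ s) (σ x) ≠ y := fun h =>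
    hsep (h ▸ sameCycle_pow_right.2 (sameCycle_apply_right.2 .rfl))
  rw [Perm.mul_apply, swap_apply_of_ne_of_ne hne_x hne_y]

lemma mul_swap_pow_succ_apply_right (hsep : ¬σ.SameCycle i j) {t : ℕ}
    (ht : t < orderOf (σ.cycleOf i)) : ((σ * swap i j) ^ (t + 1)) j = (σ ^ (t + 1)) i := by
  rw [pow_succ, Perm.mul_apply, Perm.mul_apply, swap_apply_right,
    mul_swap_pow_apply_apply_self hsep ht]

lemma mul_swap_pow_orderOf_apply_right (hsep : ¬σ.SameCycle i j) :
    ((σ * swap i j) ^ orderOf (σ.cycleOf i)) j = i := by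
  obtain ⟨s, hs⟩ := Nat.exists_eq_add_one.2 (orderOf_pos (σ.cycleOf i))
  rw [hs, mul_swap_pow_succ_apply_right hsep (by omega), ← hs, pow_orderOf_cycleOf_apply]

lemma mul_swap_pow_add_succ_apply_right (hsep : ¬σ.SameCycle i j) {u : ℕ}
    (hu : u < orderOf (σ.cycleOf j)) :
    ((σ * swap i j) ^ (orderOf (σ.cycleOf i) + (u + 1))) j = (σ ^ (u + 1)) j := by
  rw [add_comm, pow_add, Perm.mul_apply, mul_swap_pow_orderOf_apply_right hsep, pow_succ,
    Perm.mul_apply, Perm.mul_apply, swap_apply_left, swap_comm,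
    mul_swap_pow_apply_apply_self (fun h => hsep h.symm) hu]

lemma orderOf_cycleOf_mul_swap (hsep : ¬σ.SameCycle i j) :
    orderOf ((σ * swap i j).cycleOf j) = orderOf (σ.cycleOf i) + orderOf (σ.cycleOf j) := by
  obtain ⟨s, hs⟩ := Nat.exists_eq_add_one.2 (orderOf_pos (σ.cycleOf j))
  refine orderOf_cycleOf_eq_of_pow_apply (by omega) ?_ fun t ht0 ht => ?_
  · rw [hs, mul_swap_pow_add_succ_apply_right hsep (by omega), ← hs, pow_orderOf_cycleOf_apply]
  by_cases hta : t ≤ orderOf (σ.cycleOf i)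
  · obtain ⟨t, rfl⟩ := Nat.exists_eq_add_one.2 ht0
    rw [mul_swap_pow_succ_apply_right hsep (by omega)]
    exact fun h => hsep (h ▸ sameCycle_pow_right.2 .rfl)
  · obtain ⟨u, rfl⟩ : ∃ u, t = orderOf (σ.cycleOf i) + (u + 1) :=
      ⟨t - orderOf (σ.cycleOf i) - 1, by omega⟩
    rw [mul_swap_pow_add_succ_apply_right hsep (by omega), Ne,
      pow_apply_eq_self_iff_orderOf_cycleOf_dvd]
    exact fun h => absurd (Nat.le_of_dvd u.succ_pos h) (by omega)

lemma sameCycle_mul_swap_iff (hsep : ¬σ.SameCycle i j) :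
    (σ * swap i j).SameCycle j y ↔ σ.SameCycle i y ∨ σ.SameCycle j y := by
  have hji : (σ * swap i j).SameCycle j i :=
    sameCycle_iff_exists_pow_apply_eq.2 ⟨_, mul_swap_pow_orderOf_apply_right hsep⟩
  constructor
  · refine fun h => h.mem_of_forall_apply_mem (S := {y | σ.SameCycle i y ∨ σ.SameCycle j y})
      (fun z hz => ?_) (Or.inr .rfl)
    have := swap_apply_mem (S := {y | σ.SameCycle i y ∨ σ.SameCycle j y}) (Or.inl .rfl)
      (Or.inr .rfl) hz
    simpa only [Perm.mul_apply, Set.mem_ofPred_eq, sameCycle_apply_right] using this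
  · have hclosed : ∀ z ∈ {y | (σ * swap i j).SameCycle j y},
        σ z ∈ {y | (σ * swap i j).SameCycle j y} := fun z hz => by
      have := swap_apply_mem (S := {y | (σ * swap i j).SameCycle j y}) hji .rfl hz
      simpa [Perm.mul_apply] using sameCycle_apply_right.2 this
    rintro (h | h)
    · exact h.mem_of_forall_apply_mem hclosed hji
    · exact h.mem_of_forall_apply_mem hclosed .rfl

lemma sameCycle_mul_swap_iff_of_not_sameCycle (hi : ¬σ.SameCycle i x)
    (hj : ¬σ.SameCycle j x) : (σ * swap i j).SameCycle x y ↔ σ.SameCycle x y :=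
  sameCycle_iff_of_forall_pow_apply_eq (mul_swap_pow_apply_of_not_sameCycle hi hj)

lemma not_sameCycle_mul_swap_of_sameCycle (hij : i ≠ j) (h : σ.SameCycle i j) :
    ¬(σ * swap i j).SameCycle i j := by
  classical
  obtain ⟨c, ⟨hc0, hc⟩, hmin⟩ : ∃ c, (0 < c ∧ (σ ^ c) i = j) ∧
      ∀ t, 0 < t → t < c → (σ ^ t) i ≠ j := by
    have hex : ∃ c, 0 < c ∧ (σ ^ c) i = j := by
      obtain ⟨c, hc⟩ := sameCycle_iff_exists_pow_apply_eq.1 h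
      exact ⟨c, Nat.pos_of_ne_zero (by rintro rfl; exact hij hc), hc⟩
    exact ⟨Nat.find hex, Nat.find_spec hex, fun t h0 ht h => Nat.find_min hex ht ⟨h0, h⟩⟩
  have hret : ∀ t, 0 < t → t ≤ c → (σ ^ t) i ≠ i := by
    intro t h0 ht h
    rcases ht.lt_or_eq with ht | rfl
    · refine hmin (c - t) (by omega) (by omega) ?_
      calc (σ ^ (c - t)) i = (σ ^ (c - t)) ((σ ^ t) i) := by rw [h]
        _ = j := by rw [← Perm.mul_apply, ← pow_add, Nat.sub_add_cancel ht.le, hc]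
    · exact hij (h.symm.trans hc)
  -- the cycle of `σ * swap i j` through `j` is `σ i, σ² i, …, σ^c i = j`, which misses `i`
  let S : Set α := {y | ∃ t, 0 < t ∧ t ≤ c ∧ (σ ^ t) i = y}
  have hS : ∀ y ∈ S, (σ * swap i j) y ∈ S := by
    rintro _ ⟨t, h0, ht, rfl⟩
    rcases ht.lt_or_eq with ht | rfl
    · refine ⟨t + 1, t.succ_pos, ht, ?_⟩
      rw [Perm.mul_apply, swap_apply_of_ne_of_ne (hret t h0 ht.le) (hmin t h0 ht), pow_succ',
        Perm.mul_apply]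
    · exact ⟨1, one_pos, hc0, by rw [Perm.mul_apply, hc, swap_apply_right, pow_one]⟩
  intro hρ
  obtain ⟨t, h0, ht, hti⟩ := hρ.symm.mem_of_forall_apply_mem hS ⟨c, hc0, le_rfl, hc⟩
  exact hret t h0 ht hti

lemma sameCycle_mul_swap_iff_not_sameCycle (hij : i ≠ j) :
    (σ * swap i j).SameCycle i j ↔ ¬σ.SameCycle i j :=
  ⟨fun h h' => not_sameCycle_mul_swap_of_sameCycle hij h' h,
    fun h => ((sameCycle_mul_swap_iff h).2 (Or.inl .rfl)).symm⟩

end CycleOf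

section CycleMaxima

variable [Fintype α] [LinearOrder α]

def cycleMaxima (σ : Perm α) : Finset α :=
  {x | ∀ y, σ.SameCycle x y → y ≤ x}

lemma mem_cycleMaxima : x ∈ σ.cycleMaxima ↔ ∀ y, σ.SameCycle x y → y ≤ x := by
  simp [cycleMaxima]

lemma eq_of_mem_cycleMaxima (hx : x ∈ σ.cycleMaxima) (hy : y ∈ σ.cycleMaxima)
    (h : σ.SameCycle x y) : x = y :=
  le_antisymm (mem_cycleMaxima.1 hy x h.symm) (mem_cycleMaxima.1 hx y h)

lemma exists_mem_cycleMaxima_sameCycle (σ : Perm α) (x : α) :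
    ∃ m ∈ σ.cycleMaxima, σ.SameCycle x m := by
  have hne : ({y | σ.SameCycle x y} : Finset α).Nonempty := ⟨x, by simpa using SameCycle.refl σ x⟩
  have hmax := Finset.mem_filter.1 (Finset.max'_mem _ hne)
  exact ⟨_, mem_cycleMaxima.2 fun y hy =>
    Finset.le_max' _ y (by simpa using hmax.2.trans hy), hmax.2⟩

lemma cycleMaxima_congr (h : ∀ x y, ρ.SameCycle x y ↔ σ.SameCycle x y) :
    ρ.cycleMaxima = σ.cycleMaxima := by
  ext x
  simp only [mem_cycleMaxima, h]

lemma prod_cycleMaxima_eq_prod {β : Type*} [CommMonoid β] {f : α → β}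
    (hf : ∀ x y, σ.SameCycle x y → f x = f y) {T : Finset α}
    (hT : ∀ x, ∃ t ∈ T, σ.SameCycle x t) (hT' : ∀ t ∈ T, ∀ t' ∈ T, σ.SameCycle t t' → t = t') :
    ∏ x ∈ σ.cycleMaxima, f x = ∏ t ∈ T, f t := by
  choose r hrT hr using hT
  refine Finset.prod_bij (fun m _ => r m) (fun m _ => hrT m)
    (fun m hm m' hm' h => eq_of_mem_cycleMaxima hm hm' ((hr m).trans (h ▸ (hr m').symm)))
    (fun t ht => ?_) (fun m _ => hf _ _ (hr m))
  obtain ⟨m, hm, htm⟩ := σ.exists_mem_cycleMaxima_sameCycle t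
  exact ⟨m, hm, hT' _ (hrT m) t ht ((hr m).symm.trans htm.symm)⟩

def cycleMaximaOff (σ : Perm α) (i j : α) : Finset α :=
  σ.cycleMaxima.filter fun x => ¬σ.SameCycle i x ∧ ¬σ.SameCycle j x

lemma mem_cycleMaximaOff :
    x ∈ σ.cycleMaximaOff i j ↔ x ∈ σ.cycleMaxima ∧ ¬σ.SameCycle i x ∧ ¬σ.SameCycle j x :=
  Finset.mem_filter

lemma exists_mem_cycleMaximaOff (hi : ¬σ.SameCycle i x) (hj : ¬σ.SameCycle j x) :
    ∃ m ∈ σ.cycleMaximaOff i j, σ.SameCycle x m := by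
  obtain ⟨m, hm, hxm⟩ := σ.exists_mem_cycleMaxima_sameCycle x
  exact ⟨m, mem_cycleMaximaOff.2 ⟨hm, fun h => hi (h.trans hxm.symm),
    fun h => hj (h.trans hxm.symm)⟩, hxm⟩

lemma prod_cycleMaxima_eq_mul_mul_prod_cycleMaximaOff {β : Type*} [CommMonoid β] {f : α → β}
    (hf : ∀ x y, σ.SameCycle x y → f x = f y) (hsep : ¬σ.SameCycle i j) :
    ∏ x ∈ σ.cycleMaxima, f x = f i * f j * ∏ x ∈ σ.cycleMaximaOff i j, f x := by
  have hij : i ≠ j := fun h => hsep (h ▸ .rfl)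
  have hi : i ∉ insert j (σ.cycleMaximaOff i j) := by
    simp [mem_cycleMaximaOff, SameCycle.refl, hij]
  have hj : j ∉ σ.cycleMaximaOff i j := by simp [mem_cycleMaximaOff, SameCycle.refl]
  rw [prod_cycleMaxima_eq_prod hf (T := insert i (insert j (σ.cycleMaximaOff i j))),
    Finset.prod_insert hi, Finset.prod_insert hj, mul_assoc]
  · intro x
    by_cases hix : σ.SameCycle i x
    · exact ⟨i, by simp, hix.symm⟩
    by_cases hjx : σ.SameCycle j x
    · exact ⟨j, by simp, hjx.symm⟩
    obtain ⟨m, hm, hxm⟩ := exists_mem_cycleMaximaOff hix hjx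
    exact ⟨m, by simp [hm], hxm⟩
  · intro t ht t' ht' h
    simp only [Finset.mem_insert] at ht ht'
    rcases ht with rfl | rfl | ht <;> rcases ht' with rfl | rfl | ht'
    all_goals first
      | rfl
      | exact absurd h hsep
      | exact absurd h.symm hsep
      | exact absurd h (mem_cycleMaximaOff.1 ht').2.1
      | exact absurd h (mem_cycleMaximaOff.1 ht').2.2
      | exact absurd h.symm (mem_cycleMaximaOff.1 ht).2.1
      | exact absurd h.symm (mem_cycleMaximaOff.1 ht).2.2
      | exact eq_of_mem_cycleMaxima (mem_cycleMaximaOff.1 ht).1 (mem_cycleMaximaOff.1 ht').1 h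

lemma prod_cycleMaxima_mul_swap {β : Type*} [CommMonoid β] {f : α → β}
    (hf : ∀ x y, (σ * swap i j).SameCycle x y → f x = f y) (hsep : ¬σ.SameCycle i j) :
    ∏ x ∈ (σ * swap i j).cycleMaxima, f x = f j * ∏ x ∈ σ.cycleMaximaOff i j, f x := by
  rw [prod_cycleMaxima_eq_prod hf (T := insert j (σ.cycleMaximaOff i j)),
    Finset.prod_insert (by simp [mem_cycleMaximaOff, SameCycle.refl])]
  · intro x
    by_cases h : σ.SameCycle i x ∨ σ.SameCycle j x
    · exact ⟨j, Finset.mem_insert_self _ _, ((sameCycle_mul_swap_iff hsep).2 h).symm⟩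
    rw [not_or] at h
    obtain ⟨m, hm, hxm⟩ := exists_mem_cycleMaximaOff h.1 h.2
    exact ⟨m, Finset.mem_insert_of_mem hm,
      (sameCycle_mul_swap_iff_of_not_sameCycle h.1 h.2).2 hxm⟩
  · intro t ht t' ht' h
    simp only [Finset.mem_insert] at ht ht'
    rcases ht with rfl | ht <;> rcases ht' with rfl | ht'
    · rfl
    · obtain ⟨-, hi, hj⟩ := mem_cycleMaximaOff.1 ht'
      exact ((sameCycle_mul_swap_iff hsep).1 h).elim (absurd · hi) (absurd · hj)
    · obtain ⟨-, hi, hj⟩ := mem_cycleMaximaOff.1 ht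
      exact ((sameCycle_mul_swap_iff hsep).1 h.symm).elim (absurd · hi) (absurd · hj)
    · obtain ⟨hm, hi, hj⟩ := mem_cycleMaximaOff.1 ht
      exact eq_of_mem_cycleMaxima hm (mem_cycleMaximaOff.1 ht').1
        ((sameCycle_mul_swap_iff_of_not_sameCycle hi hj).1 h)

end CycleMaxima

end Equiv.Perm

section CycFac

open Equiv Perm

variable {n : ℕ} (M : Matrix (Fin n) (Fin n) HC) {σ ρ : Perm (Fin n)} {i j x y z : Fin n}

lemma cycFac_eq_of_forall_pow_apply_eq (h : ∀ t : ℕ, (ρ ^ t) x = (σ ^ t) x) :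
    cycFac M ρ x = cycFac M σ x := by
  unfold cycFac
  rw [orderOf_cycleOf_eq_of_forall_pow_apply_eq_self_iff (ρ := ρ) (σ := σ) fun k => by rw [h]]
  simp only [h]

lemma re_cycFac_apply_self (σ : Perm (Fin n)) (x : Fin n) :
    (cycFac M σ (σ x)).re = (cycFac M σ x).re := by
  obtain ⟨s, hs⟩ := Nat.exists_eq_add_one.2 (orderOf_pos (σ.cycleOf x))
  have hper : (σ ^ (s + 1)) x = x := by rw [← hs]; exact pow_orderOf_cycleOf_apply σ x
  have hshift : ∀ t : ℕ, (σ ^ t) (σ x) = (σ ^ (t + 1)) x := fun t => by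
    rw [pow_succ, Perm.mul_apply]
  unfold cycFac
  rw [cycleOf_self_apply, hs, List.prod_range_succ, List.prod_range_succ',
    QuaternionAlgebra.re_mul_comm]
  simp only [hshift, hper, pow_succ' σ (s + 1), Perm.mul_apply, pow_zero, Perm.one_apply,
    zero_add, pow_one]

lemma re_cycFac_of_sameCycle (h : σ.SameCycle x y) : (cycFac M σ y).re = (cycFac M σ x).re := by
  obtain ⟨t, rfl⟩ := sameCycle_iff_exists_pow_apply_eq.1 h
  clear h
  induction t with
  | zero => rfl
  | succ t ih => rw [pow_succ', Perm.mul_apply, re_cycFac_apply_self, ih]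

lemma cycFac_reverseCycle_of_not_sameCycle (h : ¬σ.SameCycle z y) :
    cycFac M (σ.reverseCycle z) y = cycFac M σ y :=
  cycFac_eq_of_forall_pow_apply_eq M (reverseCycle_pow_apply_of_not_sameCycle h)

lemma cycFac_reverseCycle_self (hM : IsSelfAdjointQ M) (σ : Perm (Fin n)) (z : Fin n) :
    cycFac M (σ.reverseCycle z) z = star (cycFac M σ z) := by
  set p := orderOf (σ.cycleOf z)
  have hback : ∀ t ≤ p, (σ⁻¹ ^ t) z = (σ ^ (p - t)) z := fun t ht => by
    rw [inv_pow, inv_eq_iff_eq, ← Perm.mul_apply, ← pow_add, Nat.add_sub_cancel' ht,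
      pow_orderOf_cycleOf_apply]
  unfold cycFac
  rw [orderOf_cycleOf_reverseCycle, List.star_prod_map_range]
  refine congrArg List.prod (List.map_congr_left fun t ht => ?_)
  have ht : t < p := List.mem_range.1 ht
  rw [reverseCycle_pow_apply_of_sameCycle .rfl, reverseCycle_pow_apply_of_sameCycle .rfl,
    hback t ht.le, hback (t + 1) ht, hM, show p - 1 - t + 1 = p - t by omega,
    show p - (t + 1) = p - 1 - t by omega]

lemma cycFac_mul_swap (hr : ∀ k, M i k = M j k) (hsep : ¬σ.SameCycle i j) :
    cycFac M (σ * swap i j) j = cycFac M σ i * cycFac M σ j := by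
  unfold cycFac
  rw [orderOf_cycleOf_mul_swap hsep, List.range_add, List.map_append, List.prod_append,
    List.map_map]
  congr 1 <;> refine congrArg List.prod (List.map_congr_left fun t ht => ?_) <;>
    have ht := List.mem_range.1 ht
  · rw [mul_swap_pow_succ_apply_right hsep ht]
    rcases t with _ | t
    · rw [pow_zero, pow_zero, Perm.one_apply, Perm.one_apply, hr]
    · rw [mul_swap_pow_succ_apply_right hsep (by omega)]
  · rw [Function.comp_apply, add_assoc, mul_swap_pow_add_succ_apply_right hsep ht]
    rcases t with _ | t
    · rw [add_zero, mul_swap_pow_orderOf_apply_right hsep, pow_zero, Perm.one_apply, hr]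
    · rw [mul_swap_pow_add_succ_apply_right hsep (by omega)]

end CycFac

section ScalarForm

open Equiv Perm Finset

variable {n : ℕ} (M : Matrix (Fin n) (Fin n) HC) {σ : Perm (Fin n)} {x z : Fin n}

noncomputable def permFacRe (σ : Perm (Fin n)) : ℂ := ∏ x ∈ σ.cycleMaxima, (cycFac M σ x).re

lemma permFac_eq_descProd (σ : Perm (Fin n)) :
    permFac M σ = σ.cycleMaxima.descProd (cycFac M σ) := by
  unfold permFac descProd cycleMaxima
  congr

lemma coe_permFacRe (σ : Perm (Fin n)) :
    (permFacRe M σ : HC) = σ.cycleMaxima.descProd fun x => ((cycFac M σ x).re : HC) := by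
  simpa [permFacRe, QuaternionAlgebra.coe_algebraMap] using
    (descProd_comp_monoidHom (algebraMap ℂ HC) σ.cycleMaxima fun x => (cycFac M σ x).re).symm

noncomputable def permFacTelescopeTerm (σ : Perm (Fin n)) (z : Fin n) : HC :=
  (σ.cycleMaxima.filter (z < ·)).descProd (fun x => ((cycFac M σ x).re : HC)) *
    (cycFac M σ z - (cycFac M σ z).re) * (σ.cycleMaxima.filter (· < z)).descProd (cycFac M σ)

lemma permFac_sub_coe_permFacRe (σ : Perm (Fin n)) :
    permFac M σ - permFacRe M σ = ∑ z ∈ σ.cycleMaxima, permFacTelescopeTerm M σ z := by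
  rw [permFac_eq_descProd, coe_permFacRe]
  exact descProd_sub_descProd _ _ _

lemma cycleMaxima_reverseCycle (σ : Perm (Fin n)) (z : Fin n) :
    (σ.reverseCycle z).cycleMaxima = σ.cycleMaxima :=
  cycleMaxima_congr fun _ _ => sameCycle_reverseCycle_iff

lemma permFacTelescopeTerm_reverseCycle (hM : IsSelfAdjointQ M) (hz : z ∈ σ.cycleMaxima) :
    permFacTelescopeTerm M (σ.reverseCycle z) z = -permFacTelescopeTerm M σ z := by
  have hoff : ∀ x ∈ σ.cycleMaxima, x ≠ z → cycFac M (σ.reverseCycle z) x = cycFac M σ x :=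
    fun x hx hne => cycFac_reverseCycle_of_not_sameCycle M fun h =>
      hne (eq_of_mem_cycleMaxima hz hx h).symm
  unfold permFacTelescopeTerm
  rw [cycleMaxima_reverseCycle,
    descProd_congr fun x hx => by rw [hoff x (mem_filter.1 hx).1 (mem_filter.1 hx).2.ne'],
    descProd_congr fun x hx => hoff x (mem_filter.1 hx).1 (mem_filter.1 hx).2.ne,
    cycFac_reverseCycle_self M hM, QuaternionAlgebra.re_star_eq_re,
    QuaternionAlgebra.star_sub_coe_re]
  noncomm_ring

theorem Qdet_eq_coe_sum_sign_mul_permFacRe (hM : IsSelfAdjointQ M) :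
    Qdet M = ((∑ σ : Perm (Fin n), (sign σ : ℂ) * permFacRe M σ : ℂ) : HC) := by
  rw [← sub_eq_zero, Qdet, ← QuaternionAlgebra.coe_algebraMap, map_sum, ← sum_sub_distrib]
  simp_rw [map_mul, map_intCast, QuaternionAlgebra.coe_algebraMap, ← mul_sub,
    permFac_sub_coe_permFacRe, mul_sum]
  rw [sum_sigma']
  refine sum_eq_zero_of_neg_involution (fun p => ⟨p.1.reverseCycle p.2, p.2⟩)
    (fun p hp => ?_) (fun p _ => by simp) (fun p hp => ?_)
  · simpa [cycleMaxima_reverseCycle] using hp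
  · rw [mem_sigma] at hp
    simp only [sign_reverseCycle, permFacTelescopeTerm_reverseCycle M hM hp.2, mul_neg]

end ScalarForm

section EqualRows

open Equiv Perm Finset

variable {n : ℕ} (M : Matrix (Fin n) (Fin n) HC) {σ : Perm (Fin n)} {i j : Fin n}

lemma permFacRe_eq_of_not_sameCycle (hsep : ¬σ.SameCycle i j) :
    permFacRe M σ = (cycFac M σ i).re * (cycFac M σ j).re *
      ∏ x ∈ σ.cycleMaximaOff i j, (cycFac M σ x).re :=
  prod_cycleMaxima_eq_mul_mul_prod_cycleMaximaOff
    (fun _ _ h => (re_cycFac_of_sameCycle M h).symm) hsep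

lemma permFacRe_mul_swap (hr : ∀ k, M i k = M j k) (hsep : ¬σ.SameCycle i j) :
    permFacRe M (σ * swap i j) = (cycFac M σ i * cycFac M σ j).re *
      ∏ x ∈ σ.cycleMaximaOff i j, (cycFac M σ x).re := by
  rw [permFacRe, prod_cycleMaxima_mul_swap (fun _ _ h => (re_cycFac_of_sameCycle M h).symm) hsep,
    cycFac_mul_swap M hr hsep]
  refine congrArg _ (prod_congr rfl fun x hx => ?_)
  obtain ⟨-, hi, hj⟩ := mem_cycleMaximaOff.1 hx
  rw [cycFac_eq_of_forall_pow_apply_eq M (mul_swap_pow_apply_of_not_sameCycle hi hj)]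

lemma sign_mul_permFacRe_mul_swap_add (hM : IsSelfAdjointQ M) (hij : i ≠ j)
    (hr : ∀ k, M i k = M j k) (hsep : ¬σ.SameCycle i j) :
    (sign (σ * swap i j) : ℂ) * permFacRe M (σ * swap i j) +
        (sign (σ.reverseCycle j * swap i j) : ℂ) * permFacRe M (σ.reverseCycle j * swap i j) =
      -(2 * ((sign σ : ℂ) * permFacRe M σ)) := by
  have hsep' : ¬(σ.reverseCycle j).SameCycle i j := by rwa [sameCycle_reverseCycle_iff]
  have hoff : ∀ x ∈ σ.cycleMaximaOff i j, cycFac M (σ.reverseCycle j) x = cycFac M σ x :=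
    fun x hx => cycFac_reverseCycle_of_not_sameCycle M (mem_cycleMaximaOff.1 hx).2.2
  have hoff' : (σ.reverseCycle j).cycleMaximaOff i j = σ.cycleMaximaOff i j := by
    simp only [cycleMaximaOff, cycleMaxima_reverseCycle, sameCycle_reverseCycle_iff]
  rw [permFacRe_mul_swap M hr hsep, permFacRe_mul_swap M hr hsep',
    permFacRe_eq_of_not_sameCycle M hsep, hoff',
    prod_congr rfl fun x hx => congrArg QuaternionAlgebra.re (hoff x hx),
    cycFac_reverseCycle_of_not_sameCycle M (fun h => hsep h.symm), cycFac_reverseCycle_self M hM,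
    map_mul, map_mul, sign_swap hij, sign_reverseCycle]
  push_cast
  linear_combination (-(sign σ : ℂ) * ∏ x ∈ σ.cycleMaximaOff i j, (cycFac M σ x).re) *
    QuaternionAlgebra.re_mul_add_re_mul_star (cycFac M σ i) (cycFac M σ j)

theorem sum_sign_mul_permFacRe_eq_zero (hM : IsSelfAdjointQ M) (hij : i ≠ j)
    (hr : ∀ k, M i k = M j k) : ∑ σ : Perm (Fin n), (sign σ : ℂ) * permFacRe M σ = 0 := by
  set F : Perm (Fin n) → ℂ := fun σ => (sign σ : ℂ) * permFacRe M σ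
  set separated := univ.filter fun σ : Perm (Fin n) => ¬σ.SameCycle i j
  have hmerged : ∑ σ ∈ univ.filter (fun σ : Perm (Fin n) => σ.SameCycle i j), F σ =
      ∑ σ ∈ separated, F (σ * swap i j) :=
    sum_nbij' (· * swap i j) (· * swap i j)
      (fun σ hσ => mem_filter.2
        ⟨mem_univ _, not_sameCycle_mul_swap_of_sameCycle hij (mem_filter.1 hσ).2⟩)
      (fun σ hσ => mem_filter.2
        ⟨mem_univ _, (sameCycle_mul_swap_iff_not_sameCycle hij).2 (mem_filter.1 hσ).2⟩)
      (fun σ _ => mul_swap_mul_self i j σ) (fun σ _ => mul_swap_mul_self i j σ)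
      (fun σ _ => by rw [mul_swap_mul_self])
  have hreverse : ∑ σ ∈ separated, F (σ * swap i j) =
      ∑ σ ∈ separated, F (σ.reverseCycle j * swap i j) :=
    sum_nbij' (reverseCycle · j) (reverseCycle · j)
      (fun σ hσ => by simpa [separated, sameCycle_reverseCycle_iff] using hσ)
      (fun σ hσ => by simpa [separated, sameCycle_reverseCycle_iff] using hσ)
      (fun σ _ => reverseCycle_reverseCycle σ j) (fun σ _ => reverseCycle_reverseCycle σ j)
      (fun σ _ => by rw [reverseCycle_reverseCycle])
  have hpair : ∑ σ ∈ separated, (F (σ * swap i j) + F (σ.reverseCycle j * swap i j)) =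
      ∑ σ ∈ separated, -(2 * F σ) :=
    sum_congr rfl fun σ hσ =>
      sign_mul_permFacRe_mul_swap_add M hM hij hr (mem_filter.1 hσ).2
  rw [sum_add_distrib, ← hreverse, ← hmerged, sum_neg_distrib, ← mul_sum] at hpair
  rw [← sum_filter_add_sum_filter_not univ fun σ : Perm (Fin n) => σ.SameCycle i j]
  linear_combination hpair / 2

theorem Qdet_eq_zero_of_row_eq (hM : IsSelfAdjointQ M) (hij : i ≠ j) (hr : ∀ k, M i k = M j k) :
    Qdet M = 0 := by
  rw [Qdet_eq_coe_sum_sign_mul_permFacRe M hM, sum_sign_mul_permFacRe_eq_zero M hM hij hr,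
    QuaternionAlgebra.coe_zero]

end EqualRows

/-- if `M` is a self-adjoint `n × n` matrix over `ℍ_ℂ` and two distinct columns
of `M` are equal then `Qdet M = 0`; the same holds if two distinct rows of `M` are equal. -/
theorem statement5 (n : ℕ) (M : Matrix (Fin n) (Fin n) HC) (hM : IsSelfAdjointQ M)
    (i j : Fin n) (hij : i ≠ j) :
    ((∀ k, M k i = M k j) → Qdet M = 0) ∧ ((∀ k, M i k = M j k) → Qdet M = 0) :=
  ⟨fun hc => Qdet_eq_zero_of_row_eq M hM hij fun k => by rw [hM i k, hM j k, hc k],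
    Qdet_eq_zero_of_row_eq M hM hij⟩
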